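/- arXiv:math/0303249 — 2 statements merged into one kernel-verified Lean document; each statement's English description precedes it below -/
import Mathlib

section
/- For every A ∈ GL₂(ℤ), one has |A⁻¹| = |A|. -/
/-!
The letters `S₁, S₂, S₃, J` are involutions, so inverting a normal form `ε · w · S₁^m` reverses the
word `w`, and reversal preserves the letter conditions; this settles `m = 0`. For `m = 1` (and `n ≥ 1`) one moves
`S₁` from the right to the left end of `w` using `J Sₓ S₁ = -S₃ J S_{4-x}`, then
`J Sₓ S₃ = -S₃ J S_{3-x}` for the inner letters, and finally `Sₓ S₃ = S₁ S_{4-x}`: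
this gives `w S₁ = (-1)ⁿ S₁ w'` with `w'` admissible of the same length, hence
`A⁻¹ = ± w'⁻¹ S₁` is again a normal form with `n` factors `J`.
-/

/-- The matrix `S₁ = [[1,-1],[0,-1]]` as an element of `GL₂(ℤ)`. -/
def S₁ : GL (Fin 2) ℤ := ⟨!![1, -1; 0, -1], !![1, -1; 0, -1], by decide, by decide⟩

/-- The matrix `S₂ = [[-1,0],[-1,1]]` as an element of `GL₂(ℤ)`. -/
def S₂ : GL (Fin 2) ℤ := ⟨!![-1, 0; -1, 1], !![-1, 0; -1, 1], by decide, by decide⟩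

/-- The matrix `S₃ = [[0,1],[1,0]]` as an element of `GL₂(ℤ)`. -/
def S₃ : GL (Fin 2) ℤ := ⟨!![0, 1; 1, 0], !![0, 1; 1, 0], by decide, by decide⟩

/-- The matrix `J = [[-1,0],[0,1]]` as an element of `GL₂(ℤ)`. -/
def Jmat : GL (Fin 2) ℤ := ⟨!![-1, 0; 0, 1], !![-1, 0; 0, 1], by decide, by decide⟩

/-- `SS k` is `Sₖ` for `k ∈ {1,2,3}` (junk value `1` otherwise). -/
def SS : ℕ → GL (Fin 2) ℤ
  | 1 => S₁
  | 2 => S₂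
  | 3 => S₃
  | _ => 1

/-- `wordProd i n = S_{i 0} · J · S_{i 1} · J ⋯ S_{i (n-1)} · J · S_{i n}`,
the alternating word with `n` factors `J` and `n+1` factors `S`. -/
def wordProd (i : ℕ → ℕ) : ℕ → GL (Fin 2) ℤ
  | 0 => SS (i 0)
  | n + 1 => wordProd i n * Jmat * SS (i (n + 1))

/-- The norm `|A|` of `A ∈ GL₂(ℤ)`: the number `n` of factors `J` in the (unique)
expression `A = ε · S_{i₀} · J · S_{i₁} · J ⋯ S_{i_{n-1}} · J · S_{i_n} · S₁^m` with
`ε ∈ {1,-1}`, `i₀, i_n ∈ {1,2,3}`, `i₁, …, i_{n-1} ∈ {1,2}`, `m ∈ {0,1}`. -/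
noncomputable def matNorm (A : GL (Fin 2) ℤ) : ℕ :=
  sInf {n | ∃ (ε : GL (Fin 2) ℤ) (i : ℕ → ℕ) (m : ℕ),
    (ε = 1 ∨ ε = -1) ∧
    (i 0 = 1 ∨ i 0 = 2 ∨ i 0 = 3) ∧
    (i n = 1 ∨ i n = 2 ∨ i n = 3) ∧
    (∀ k, 0 < k → k < n → i k = 1 ∨ i k = 2) ∧
    m ≤ 1 ∧
    A = ε * wordProd i n * S₁ ^ m}

/-- The conjugacy norm `‖A‖`: the minimum of `|B·A·B⁻¹|` over all `B ∈ GL₂(ℤ)`. -/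
noncomputable def matNormConj (A : GL (Fin 2) ℤ) : ℕ :=
  sInf {k | ∃ B : GL (Fin 2) ℤ, matNorm (B * A * B⁻¹) = k}

lemma SS_inv (x : ℕ) : (SS x)⁻¹ = SS x := by
  match x with
  | 0 => exact inv_one
  | 1 => rfl
  | 2 => rfl
  | 3 => rfl
  | _ + 4 => exact inv_one

lemma SS_mul_S₁ {x : ℕ} (hx : x = 1 ∨ x = 2 ∨ x = 3) :
    ∃ y, (y = 1 ∨ y = 2 ∨ y = 3) ∧ SS x * S₁ = S₁ * SS y := by
  rcases hx with rfl | rfl | rfl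
  exacts [⟨1, by simp, Units.ext (by decide)⟩, ⟨3, by simp, Units.ext (by decide)⟩,
    ⟨2, by simp, Units.ext (by decide)⟩]

-- `4 - x` swaps the letters 1 and 3, `3 - x` swaps 1 and 2.
lemma SS_mul_S₃ {x : ℕ} (hx : x = 1 ∨ x = 2 ∨ x = 3) : SS x * S₃ = S₁ * SS (4 - x) := by
  rcases hx with rfl | rfl | rfl <;> exact Units.ext (by decide)

lemma Jmat_mul_SS_mul_S₃ {x : ℕ} (hx : x = 1 ∨ x = 2) :
    Jmat * SS x * S₃ = -(S₃ * Jmat * SS (3 - x)) := by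
  rcases hx with rfl | rfl <;> exact Units.ext (by decide)

lemma Jmat_mul_SS_mul_S₁ {x : ℕ} (hx : x = 1 ∨ x = 2 ∨ x = 3) :
    Jmat * SS x * S₁ = -(S₃ * Jmat * SS (4 - x)) := by
  rcases hx with rfl | rfl | rfl <;> exact Units.ext (by decide)

lemma wordProd_congr {i i' : ℕ → ℕ} {n : ℕ} (h : ∀ k ≤ n, i k = i' k) :
    wordProd i n = wordProd i' n := by
  induction n with
  | zero => simp [wordProd, h 0 le_rfl]
  | succ n ih =>
    rw [wordProd, wordProd, ih fun k hk => h k (by omega), h (n + 1) le_rfl]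

lemma wordProd_succ' (i : ℕ → ℕ) (n : ℕ) :
    wordProd i (n + 1) = SS (i 0) * Jmat * wordProd (fun k => i (k + 1)) n := by
  induction n with
  | zero => rfl
  | succ n ih =>
    rw [wordProd, ih]
    simp only [wordProd, mul_assoc]

lemma wordProd_inv (i : ℕ → ℕ) (n : ℕ) :
    (wordProd i n)⁻¹ = wordProd (fun k => i (n - k)) n := by
  induction n with
  | zero => exact SS_inv (i 0)
  | succ n ih =>
    rw [wordProd, mul_inv_rev, mul_inv_rev, ih, SS_inv, show Jmat⁻¹ = Jmat from rfl,
      wordProd_succ', wordProd_congr fun k _ => show i (n - k) = i (n + 1 - (k + 1)) by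
        congr 1; omega]
    simp only [Nat.sub_zero, mul_assoc]

def IsAdmissible (i : ℕ → ℕ) (n : ℕ) : Prop :=
  (i 0 = 1 ∨ i 0 = 2 ∨ i 0 = 3) ∧ (i n = 1 ∨ i n = 2 ∨ i n = 3) ∧
    ∀ k, 0 < k → k < n → i k = 1 ∨ i k = 2

lemma IsAdmissible.reverse {i : ℕ → ℕ} {n : ℕ} (hi : IsAdmissible i n) :
    IsAdmissible (fun k => i (n - k)) n := by
  obtain ⟨h0, hn, hmid⟩ := hi
  refine ⟨hn, by simpa using h0, fun k hk hkn => hmid (n - k) (by omega) (by omega)⟩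

lemma wordProd_mul_S₃ {j : ℕ → ℕ} {n : ℕ} (h0 : j 0 = 1 ∨ j 0 = 2 ∨ j 0 = 3)
    (hmid : ∀ k, 0 < k → k ≤ n → j k = 1 ∨ j k = 2) :
    wordProd j n * S₃ =
      (-1) ^ n * (S₁ * wordProd (fun k => if k = 0 then 4 - j 0 else 3 - j k) n) := by
  induction n with
  | zero => simpa [wordProd] using SS_mul_S₃ h0
  | succ n ih =>
    have hx := hmid (n + 1) n.succ_pos le_rfl
    calc wordProd j (n + 1) * S₃ = wordProd j n * (Jmat * SS (j (n + 1)) * S₃) := by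
          simp only [wordProd, mul_assoc]
      _ = -(wordProd j n * S₃ * Jmat * SS (3 - j (n + 1))) := by
          rw [Jmat_mul_SS_mul_S₃ hx]; simp only [mul_neg, mul_assoc]
      _ = _ := by
          rw [ih fun k hk hkn => hmid k hk (by omega)]
          simp [wordProd, pow_succ, mul_assoc]

lemma exists_wordProd_mul_S₁ {j : ℕ → ℕ} {n : ℕ} (hj : IsAdmissible j n) :
    ∃ j', IsAdmissible j' n ∧ wordProd j n * S₁ = (-1) ^ n * (S₁ * wordProd j' n) := by
  obtain ⟨h0, hn, hmid⟩ := hj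
  cases n with
  | zero =>
    obtain ⟨y, hy, hxy⟩ := SS_mul_S₁ h0
    exact ⟨fun _ => y, ⟨hy, hy, by omega⟩, by simpa [wordProd] using hxy⟩
  | succ n =>
    refine ⟨fun k => if k = 0 ∨ k = n + 1 then 4 - j k else 3 - j k, ⟨?_, ?_, ?_⟩, ?_⟩
    · simp only [true_or, if_true]; omega
    · simp only [or_true, if_true]; omega
    · intro k hk hkn
      have := hmid k hk hkn
      simp only [show ¬(k = 0 ∨ k = n + 1) by omega, if_false]; omega
    · calc wordProd j (n + 1) * S₁ = wordProd j n * (Jmat * SS (j (n + 1)) * S₁) := by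
            simp only [wordProd, mul_assoc]
        _ = -(wordProd j n * S₃ * Jmat * SS (4 - j (n + 1))) := by
            rw [Jmat_mul_SS_mul_S₁ hn]; simp only [mul_neg, mul_assoc]
        _ = _ := by
            rw [wordProd_mul_S₃ h0 fun k hk hkn => hmid k hk (by omega), wordProd,
              wordProd_congr (i' := fun k => if k = 0 ∨ k = n + 1 then 4 - j k else 3 - j k)
                fun k hk => by by_cases k = 0 <;> simp [*]; omega]
            simp [pow_succ, mul_assoc]

def HasNormalForm (A : GL (Fin 2) ℤ) (n : ℕ) : Prop :=
  ∃ (ε : GL (Fin 2) ℤ) (i : ℕ → ℕ) (m : ℕ),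
    (ε = 1 ∨ ε = -1) ∧ IsAdmissible i n ∧ m ≤ 1 ∧ A = ε * wordProd i n * S₁ ^ m

lemma matNorm_eq_sInf (A : GL (Fin 2) ℤ) : matNorm A = sInf {n | HasNormalForm A n} := by
  simp only [matNorm, HasNormalForm, IsAdmissible, and_assoc]

lemma sign_mul_inv {ε : GL (Fin 2) ℤ} (hε : ε = 1 ∨ ε = -1) (B : GL (Fin 2) ℤ) :
    (ε * B)⁻¹ = ε * B⁻¹ := by
  rcases hε with rfl | rfl <;> simp

lemma HasNormalForm.inv {A : GL (Fin 2) ℤ} {n : ℕ} (h : HasNormalForm A n) :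
    HasNormalForm A⁻¹ n := by
  obtain ⟨ε, i, m, hε, hi, hm, rfl⟩ := h
  interval_cases m
  · exact ⟨ε, _, 0, hε, hi.reverse, zero_le_one, by simp [sign_mul_inv hε, wordProd_inv]⟩
  · obtain ⟨j, hj, hw⟩ := exists_wordProd_mul_S₁ hi
    have hsign : (-1 : GL (Fin 2) ℤ) ^ n = 1 ∨ (-1 : GL (Fin 2) ℤ) ^ n = -1 :=
      neg_one_pow_eq_or _ n
    refine ⟨ε * (-1) ^ n, _, 1, ?_, hj.reverse, le_rfl, ?_⟩
    · rcases hε with rfl | rfl <;> rcases hsign with h | h <;> simp [h]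
    · rw [pow_one, mul_assoc, hw, sign_mul_inv hε, sign_mul_inv hsign, ← wordProd_inv]
      simp [mul_assoc, show S₁⁻¹ = S₁ from rfl]

/-- For every `A ∈ GL₂(ℤ)`, one has `|A⁻¹| = |A|`. -/
theorem matNorm_inv (A : GL (Fin 2) ℤ) : matNorm A⁻¹ = matNorm A := by
  have h (n : ℕ) : HasNormalForm A⁻¹ n ↔ HasNormalForm A n :=
    ⟨fun h => inv_inv A ▸ h.inv, HasNormalForm.inv⟩
  simp only [matNorm_eq_sInf, h]
end

section
/- If p and q are coprime integers with 0 < q < p, then for every integer k one has |p, −q − k·p| = |p,q| + |k+1|. -/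
/-!
For `k ≥ 0` the pair `(p, -q - k·p)` reduces by one sign flip to `(p, q + k·p)`, and each of the
`k` subtractions of `p` costs one step. For `k < 0` the second entry is `(p - q) + (-k - 1)·p > 0`,
costing `-k - 1` steps down to `(p, p - q)`; that pair has the same complexity as `(p, q)`,
because both reduce in one step to `(q, p - q)` resp. `(p - q, q)`, and the complexity of
positive pairs is symmetric.
-/

/-- The complexity `|p,q|` of a coprime pair of integers, defined recursively by
`|±1,0| = |0,±1| = |1,1| = 0`, `|p,q| = 1 + |p,q-p|` if `q > p > 0`,
`|p,q| = 1 + |p-q,q|` if `p > q > 0`, `|p,q| = |p,-q| + 1` if `p > 0 > q`, and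
`|p,q| = |-p,-q|` if `p < 0` and `q ≠ 0`. -/
def pqComplexity (p q : ℤ) : ℕ :=
  if h1 : p < 0 then
    if q = 0 then 0 else pqComplexity (-p) (-q)
  else if h2 : p = 0 then 0
  else
    if h3 : q < 0 then pqComplexity p (-q) + 1
    else if h4 : q = 0 then 0
    else
      if h5 : p < q then 1 + pqComplexity p (q - p)
      else if h6 : q < p then 1 + pqComplexity (p - q) q
      else 0
termination_by 3 * (p.natAbs + q.natAbs) + (if p < 0 then 2 else if q < 0 then 1 else 0)
decreasing_by
  all_goals (split_ifs <;> omega)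

section

variable {p q : ℤ}

theorem pqComplexity_of_lt (hp : 0 < p) (h : p < q) :
    pqComplexity p q = 1 + pqComplexity p (q - p) := by
  rw [pqComplexity]; split_ifs <;> first | rfl | omega

theorem pqComplexity_of_gt (hq : 0 < q) (h : q < p) :
    pqComplexity p q = 1 + pqComplexity (p - q) q := by
  rw [pqComplexity]; split_ifs <;> first | rfl | omega

theorem pqComplexity_neg_right (hp : 0 < p) (hq : 0 < q) :
    pqComplexity p (-q) = pqComplexity p q + 1 := by
  rw [pqComplexity]; split_ifs <;> first | omega | rw [neg_neg]

theorem pqComplexity_comm {a b : ℤ} (ha : 0 < a) (hb : 0 < b) :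
    pqComplexity a b = pqComplexity b a := by
  rcases lt_trichotomy a b with hlt | rfl | hgt
  · rw [pqComplexity_of_lt ha hlt, pqComplexity_of_gt ha hlt,
      pqComplexity_comm ha (sub_pos.2 hlt)]
  · rfl
  · rw [pqComplexity_of_gt hb hgt, pqComplexity_of_lt hb hgt,
      pqComplexity_comm (sub_pos.2 hgt) hb]
termination_by (a + b).toNat
decreasing_by all_goals omega

theorem pqComplexity_add_mul (hp : 0 < p) (hq : 0 < q) (n : ℕ) :
    pqComplexity p (q + n * p) = pqComplexity p q + n := by
  induction n with
  | zero => simp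
  | succ n ih =>
    have hlt : p < q + n * p + p := by nlinarith [mul_nonneg n.cast_nonneg hp.le]
    rw [Nat.cast_succ, add_one_mul, ← add_assoc, pqComplexity_of_lt hp hlt, add_sub_cancel_right,
      ih]
    omega

theorem pqComplexity_sub_right (hq : 0 < q) (hqp : q < p) :
    pqComplexity p (p - q) = pqComplexity p q := by
  rw [pqComplexity_of_gt (sub_pos.2 hqp) (sub_lt_self p hq), pqComplexity_of_gt hq hqp,
    sub_sub_self, pqComplexity_comm hq (sub_pos.2 hqp)]

end

theorem pqComplexity_neg_sub_mul_general (p q : ℤ) (hq : 0 < q) (hqp : q < p)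
    (k : ℤ) : pqComplexity p (-q - k * p) = pqComplexity p q + (k + 1).natAbs := by
  have hp : 0 < p := hq.trans hqp
  rcases le_or_gt 0 k with hk | hk
  · lift k to ℕ using hk
    rw [show -q - k * p = -(q + k * p) by ring, pqComplexity_neg_right hp (by positivity),
      pqComplexity_add_mul hp hq]
    omega
  · obtain ⟨n, rfl⟩ : ∃ n : ℕ, k = -(n + 1) := ⟨(-k - 1).toNat, by omega⟩
    rw [show -q - -((n : ℤ) + 1) * p = (p - q) + n * p by ring,
      pqComplexity_add_mul hp (sub_pos.2 hqp), pqComplexity_sub_right hq hqp]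
    omega

/-- If `p` and `q` are coprime with `0 < q < p`, then `|p, -q - k·p| = |p,q| + |k+1|`
for every integer `k`. -/
theorem pqComplexity_neg_sub_mul (p q : ℤ) (hq : 0 < q) (hqp : q < p) (h : Int.gcd p q = 1)
    (k : ℤ) : pqComplexity p (-q - k * p) = pqComplexity p q + (k + 1).natAbs :=
  pqComplexity_neg_sub_mul_general p q hq hqp k
end
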